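/- Let G=(V,E) be a general dissimilarity graph and let S⊆E be a regular cover of all unbalanced cycles of G. Then G can be converted into a general metric graph by only changing weights of edges in S: there exists a nonnegative weight function w' on E with w'(e)=w(e) for every e∉S, such that in (G,w') the weight of every edge equals the shortest-path distance between its endpoints. -/

import Mathlib

/-!
Raise the weight of every edge of `S` to a constant `W` bounding all original weights; call the
result `wT`. An edge `e = uv ∉ S` is then a shortest `u`–`v` path for `wT`: a competing path either
uses an edge of `S`, and so is at least `W` long, or avoids `S`, and then closes with `e` into a
cycle that misses the cover, hence is balanced, so the path is at least `w e` long. Replacing every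
weight by the `wT`-distance between its endpoints does not change any distance, so it yields a
metric graph, and by the above it keeps the weights outside `S`.
-/

open SimpleGraph

noncomputable section

variable {V : Type*}

/-- The length of a walk: the sum of the weights of its edges. -/
def wlen {G : SimpleGraph V} (w : Sym2 V → ℝ) {u v : V} (p : G.Walk u v) : ℝ :=
  (p.edges.map w).sum

/-- The shortest-path distance between two vertices: the minimum length of a path. -/
def spDist (G : SimpleGraph V) (w : Sym2 V → ℝ) (u v : V) : ℝ :=
  sInf {x : ℝ | ∃ p : G.Walk u v, p.IsPath ∧ wlen w p = x}

/-- `(G, w)` is a general metric graph: the weight of every edge equals the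
shortest-path distance between its endpoints. -/
def IsMetricGraph (G : SimpleGraph V) (w : Sym2 V → ℝ) : Prop :=
  ∀ u v : V, G.Adj u v → w s(u, v) = spDist G w u v

/-- `e` is a top edge of the closed walk `p`: it lies on `p` and its weight strictly
exceeds the sum of the weights of all the other edges of `p`. -/
def IsTopEdge {G : SimpleGraph V} (w : Sym2 V → ℝ) {v : V} (p : G.Walk v v)
    (e : Sym2 V) : Prop :=
  e ∈ p.edges ∧ (p.edges.map w).sum - w e < w e

/-- A cycle is unbalanced if it has a top edge. -/
def IsUnbalanced {G : SimpleGraph V} (w : Sym2 V → ℝ) {v : V} (p : G.Walk v v) : Prop :=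
  ∃ e, IsTopEdge w p e

/-- `S` is a regular cover of all unbalanced cycles of `G`:
it contains at least one edge of every unbalanced cycle. -/
def RegularCover (G : SimpleGraph V) (w : Sym2 V → ℝ) (S : Set (Sym2 V)) : Prop :=
  ∀ (v : V) (p : G.Walk v v), p.IsCycle → IsUnbalanced w p → ∃ e ∈ p.edges, e ∈ S

/-- `S` is a non-top cover of all unbalanced cycles of `G`:
it contains at least one non-top edge of every unbalanced cycle. -/
def NonTopCover (G : SimpleGraph V) (w : Sym2 V → ℝ) (S : Set (Sym2 V)) : Prop :=
  ∀ (v : V) (p : G.Walk v v), p.IsCycle → IsUnbalanced w p →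
    ∃ e ∈ p.edges, e ∈ S ∧ ¬ IsTopEdge w p e

section WalkLength

variable {G : SimpleGraph V} {w : Sym2 V → ℝ}

@[simp]
lemma wlen_nil {u : V} : wlen w (Walk.nil : G.Walk u u) = 0 := rfl

@[simp]
lemma wlen_cons {u x v : V} (h : G.Adj u x) (p : G.Walk x v) :
    wlen w (Walk.cons h p) = w s(u, x) + wlen w p := by
  simp [wlen]

lemma wlen_append {u x v : V} (p : G.Walk u x) (q : G.Walk x v) :
    wlen w (p.append q) = wlen w p + wlen w q := by
  simp [wlen]

lemma wlen_reverse {u v : V} (p : G.Walk u v) : wlen w p.reverse = wlen w p := by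
  simp [wlen]

lemma wlen_mono {w' : Sym2 V → ℝ} {u v : V} (p : G.Walk u v)
    (h : ∀ e ∈ p.edges, w e ≤ w' e) : wlen w p ≤ wlen w' p :=
  List.sum_le_sum h

lemma forall_mem_map_edges_nonneg (hw : ∀ e ∈ G.edgeSet, 0 ≤ w e) {u v : V}
    (p : G.Walk u v) : ∀ x ∈ p.edges.map w, 0 ≤ x := by
  simpa using fun e he => hw e (p.edges_subset_edgeSet he)

lemma wlen_nonneg (hw : ∀ e ∈ G.edgeSet, 0 ≤ w e) {u v : V} (p : G.Walk u v) :
    0 ≤ wlen w p :=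
  List.sum_nonneg (forall_mem_map_edges_nonneg hw p)

lemma le_wlen_of_mem_edges (hw : ∀ e ∈ G.edgeSet, 0 ≤ w e) {u v : V} {p : G.Walk u v}
    {e : Sym2 V} (he : e ∈ p.edges) : w e ≤ wlen w p :=
  List.single_le_sum (forall_mem_map_edges_nonneg hw p) _ (List.mem_map_of_mem he)

lemma wlen_bypass_le [DecidableEq V] (hw : ∀ e ∈ G.edgeSet, 0 ≤ w e) {u v : V}
    (p : G.Walk u v) : wlen w p.bypass ≤ wlen w p :=
  (p.edges_bypass_sublist_edges.map w).sum_le_sum (forall_mem_map_edges_nonneg hw p)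

end WalkLength

section ShortestPathDistance

variable {G : SimpleGraph V} {w : Sym2 V → ℝ}

lemma spDist_symm (u v : V) : spDist G w u v = spDist G w v u := by
  unfold spDist
  congr 1
  ext x
  constructor <;> rintro ⟨p, hp, rfl⟩ <;> exact ⟨p.reverse, hp.reverse, wlen_reverse p⟩

lemma setOf_wlen_isPath_nonempty (hconn : G.Connected) (u v : V) :
    {x : ℝ | ∃ p : G.Walk u v, p.IsPath ∧ wlen w p = x}.Nonempty := by
  classical
  obtain ⟨p⟩ := hconn.preconnected u v
  exact ⟨wlen w p.bypass, p.bypass, p.bypass_isPath, rfl⟩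

lemma le_spDist (hconn : G.Connected) {u v : V} {c : ℝ}
    (h : ∀ p : G.Walk u v, p.IsPath → c ≤ wlen w p) : c ≤ spDist G w u v :=
  le_csInf (setOf_wlen_isPath_nonempty hconn u v) (by rintro x ⟨p, hp, rfl⟩; exact h p hp)

lemma spDist_nonneg (hconn : G.Connected) (hw : ∀ e ∈ G.edgeSet, 0 ≤ w e) (u v : V) :
    0 ≤ spDist G w u v :=
  le_spDist hconn fun p _ => wlen_nonneg hw p

variable [Fintype V]

lemma setOf_wlen_isPath_finite (u v : V) :
    {x : ℝ | ∃ p : G.Walk u v, p.IsPath ∧ wlen w p = x}.Finite := by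
  classical
  convert Set.finite_range fun p : G.Path u v => wlen w (p : G.Walk u v)
  ext x
  exact ⟨fun ⟨p, hp, hx⟩ => ⟨⟨p, hp⟩, hx⟩, fun ⟨p, hx⟩ => ⟨p, p.2, hx⟩⟩

lemma spDist_le_wlen_of_isPath {u v : V} {p : G.Walk u v} (hp : p.IsPath) :
    spDist G w u v ≤ wlen w p :=
  csInf_le (setOf_wlen_isPath_finite u v).bddBelow ⟨p, hp, rfl⟩

lemma spDist_le_of_adj {u v : V} (h : G.Adj u v) : spDist G w u v ≤ w s(u, v) := by
  simpa using spDist_le_wlen_of_isPath (G := G) (w := w) (p := .cons h .nil) (by simp [h.ne])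

lemma spDist_le_wlen (hw : ∀ e ∈ G.edgeSet, 0 ≤ w e) {u v : V} (p : G.Walk u v) :
    spDist G w u v ≤ wlen w p := by
  classical
  exact (spDist_le_wlen_of_isPath p.bypass_isPath).trans (wlen_bypass_le hw p)

lemma exists_isPath_wlen_eq_spDist (hconn : G.Connected) (u v : V) :
    ∃ p : G.Walk u v, p.IsPath ∧ wlen w p = spDist G w u v :=
  (setOf_wlen_isPath_nonempty hconn u v).csInf_mem (setOf_wlen_isPath_finite u v)

lemma spDist_triangle (hconn : G.Connected) (hw : ∀ e ∈ G.edgeSet, 0 ≤ w e) (u x v : V) :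
    spDist G w u v ≤ spDist G w u x + spDist G w x v := by
  obtain ⟨p, -, hp⟩ := exists_isPath_wlen_eq_spDist (w := w) hconn u x
  obtain ⟨q, -, hq⟩ := exists_isPath_wlen_eq_spDist (w := w) hconn x v
  calc spDist G w u v ≤ wlen w (p.append q) := spDist_le_wlen hw _
    _ = spDist G w u x + spDist G w x v := by rw [wlen_append, hp, hq]

end ShortestPathDistance

section PathMetric

variable {G : SimpleGraph V} {w : Sym2 V → ℝ}

def pathMetric (G : SimpleGraph V) (w : Sym2 V → ℝ) : Sym2 V → ℝ :=
  Sym2.lift ⟨spDist G w, spDist_symm⟩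

@[simp]
lemma pathMetric_mk (u v : V) : pathMetric G w s(u, v) = spDist G w u v := rfl

lemma pathMetric_nonneg (hconn : G.Connected) (hw : ∀ e ∈ G.edgeSet, 0 ≤ w e) (e : Sym2 V) :
    0 ≤ pathMetric G w e := by
  induction e using Sym2.ind with
  | _ u v => exact spDist_nonneg hconn hw u v

variable [Fintype V]

lemma spDist_le_wlen_pathMetric (hconn : G.Connected) (hw : ∀ e ∈ G.edgeSet, 0 ≤ w e)
    {u v : V} (p : G.Walk u v) : spDist G w u v ≤ wlen (pathMetric G w) p := by
  induction p with
  | nil => simpa using spDist_le_wlen_of_isPath (w := w) Walk.IsPath.nil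
  | @cons u x v h q ih =>
    rw [wlen_cons, pathMetric_mk]
    linarith [spDist_triangle hconn hw u x v]

lemma spDist_pathMetric (hconn : G.Connected) (hw : ∀ e ∈ G.edgeSet, 0 ≤ w e) (u v : V) :
    spDist G (pathMetric G w) u v = spDist G w u v := by
  refine le_antisymm ?_ (le_spDist hconn fun p _ => spDist_le_wlen_pathMetric hconn hw p)
  obtain ⟨p, hp, hpw⟩ := exists_isPath_wlen_eq_spDist (w := w) hconn u v
  calc spDist G (pathMetric G w) u v ≤ wlen (pathMetric G w) p := spDist_le_wlen_of_isPath hp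
    _ ≤ wlen w p := wlen_mono p fun e he => by
        induction e using Sym2.ind with
        | _ a b => exact spDist_le_of_adj (p.adj_of_mem_edges he)
    _ = spDist G w u v := hpw

lemma isMetricGraph_pathMetric (hconn : G.Connected) (hw : ∀ e ∈ G.edgeSet, 0 ≤ w e) :
    IsMetricGraph G (pathMetric G w) := fun u v _ =>
  (spDist_pathMetric hconn hw u v).symm

end PathMetric

section RegularCover

variable {G : SimpleGraph V} {w : Sym2 V → ℝ} {S : Set (Sym2 V)}

lemma le_wlen_of_regularCover (hw : ∀ e ∈ G.edgeSet, 0 ≤ w e) (hS : RegularCover G w S)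
    {u v : V} (huv : G.Adj u v) (huvS : s(u, v) ∉ S) {p : G.Walk u v} (hp : p.IsPath)
    (hpS : ∀ f ∈ p.edges, f ∉ S) : w s(u, v) ≤ wlen w p := by
  by_cases hmem : s(u, v) ∈ p.edges
  · exact le_wlen_of_mem_edges hw hmem
  by_contra! hlt
  let c : G.Walk u u := Walk.cons huv p.reverse
  have hcycle : c.IsCycle :=
    (Walk.cons_isCycle_iff _ huv).mpr ⟨hp.reverse, by simpa using hmem⟩
  have hunbalanced : IsUnbalanced w c := by
    refine ⟨s(u, v), by simp [c], ?_⟩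
    have hsum : (c.edges.map w).sum = w s(u, v) + wlen w p := by
      simp [c, wlen, List.sum_reverse]
    linarith
  obtain ⟨f, hfc, hfS⟩ := hS u c hcycle hunbalanced
  obtain rfl | hfp : f = s(u, v) ∨ f ∈ p.edges := by simpa [c] using hfc
  · exact huvS hfS
  · exact hpS f hfp hfS

variable [DecidablePred (· ∈ S)]

lemma le_piecewise_const_of_le {W : ℝ} (hW : ∀ e ∈ G.edgeSet, w e ≤ W) :
    ∀ e ∈ G.edgeSet, w e ≤ S.piecewise (fun _ => W) w e := fun e he => by
  by_cases heS : e ∈ S <;> simp [heS, hW e he]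

variable [Fintype V]

lemma spDist_piecewise_eq_of_notMem (hconn : G.Connected) (hw : ∀ e ∈ G.edgeSet, 0 ≤ w e)
    (hS : RegularCover G w S) {W : ℝ} (hW : ∀ e ∈ G.edgeSet, w e ≤ W) {u v : V}
    (huv : G.Adj u v) (huvS : s(u, v) ∉ S) :
    spDist G (S.piecewise (fun _ => W) w) u v = w s(u, v) := by
  set wT := S.piecewise (fun _ => W) w
  have hle : ∀ e ∈ G.edgeSet, w e ≤ wT e := le_piecewise_const_of_le hW
  have hwT : ∀ e ∈ G.edgeSet, 0 ≤ wT e := fun e he => (hw e he).trans (hle e he)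
  refine le_antisymm ((spDist_le_of_adj huv).trans_eq (S.piecewise_eq_of_notMem _ _ huvS))
    (le_spDist hconn fun p hp => ?_)
  by_cases hpS : ∀ f ∈ p.edges, f ∉ S
  · exact (le_wlen_of_regularCover hw hS huv huvS hp hpS).trans
      (wlen_mono p fun e he => hle e (p.edges_subset_edgeSet he))
  · obtain ⟨f, hfp, hfS⟩ : ∃ f ∈ p.edges, f ∈ S := by simpa using hpS
    calc w s(u, v) ≤ W := hW _ huv
      _ = wT f := (S.piecewise_eq_of_mem (fun _ => W) w hfS).symm
      _ ≤ wlen wT p := le_wlen_of_mem_edges hwT hfp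

end RegularCover

theorem stmt3_general [Fintype V] (G : SimpleGraph V) (hconn : G.Connected)
    (w : Sym2 V → ℝ) (hw : ∀ e ∈ G.edgeSet, 0 < w e)
    (S : Set (Sym2 V)) (hS : RegularCover G w S) :
    ∃ w' : Sym2 V → ℝ,
      (∀ e ∈ G.edgeSet, 0 ≤ w' e) ∧
      (∀ e ∈ G.edgeSet, e ∉ S → w' e = w e) ∧
      IsMetricGraph G w' := by
  classical
  have hw₀ : ∀ e ∈ G.edgeSet, 0 ≤ w e := fun e he => (hw e he).le
  obtain ⟨W, hW⟩ := (G.edgeSet.toFinite.image w).bddAbove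
  have hwW : ∀ e ∈ G.edgeSet, w e ≤ W := fun e he => hW (Set.mem_image_of_mem w he)
  set wT := S.piecewise (fun _ => W) w
  have hwT : ∀ e ∈ G.edgeSet, 0 ≤ wT e := fun e he =>
    (hw₀ e he).trans (le_piecewise_const_of_le hwW e he)
  refine ⟨pathMetric G wT, fun e _ => pathMetric_nonneg hconn hwT e, fun e he heS => ?_,
    isMetricGraph_pathMetric hconn hwT⟩
  induction e using Sym2.ind with
  | _ u v => exact spDist_piecewise_eq_of_notMem hconn hw₀ hS hwW he heS

/-- If `S ⊆ E` is a regular cover of all unbalanced cycles of a general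
dissimilarity graph `G`, then `G` can be converted into a general metric graph
by only changing (to nonnegative values) weights of edges in `S`. -/
theorem stmt3 [Fintype V] (G : SimpleGraph V) (hconn : G.Connected)
    (w : Sym2 V → ℝ) (hw : ∀ e ∈ G.edgeSet, 0 < w e)
    (S : Set (Sym2 V)) (hSE : S ⊆ G.edgeSet) (hS : RegularCover G w S) :
    ∃ w' : Sym2 V → ℝ,
      (∀ e ∈ G.edgeSet, 0 ≤ w' e) ∧
      (∀ e ∈ G.edgeSet, e ∉ S → w' e = w e) ∧
      IsMetricGraph G w' :=
  stmt3_general G hconn w hw S hS
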